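/- arXiv:1707.08484 — 4 statements merged into one kernel-verified Lean document; each statement's English description precedes it below -/
import Mathlib

section
/- Let s be a positive integer and let T be a finite tree (a connected acyclic simple graph) with at least s vertices. Then there exist nonempty vertex subsets T_1, T_2, …, T_k forming an almost-partition of the vertex set of T such that, for every i ∈ [k], the subgraph of T induced on T_i is connected and s ≤ |T_i| ≤ 3s. -/
/-!
Fix `m ≥ 1` and cover a connected vertex set `S` of the forest with more than `m` vertices,
inducting on `#S`; if `#S ≤ 3m`, `S` is a single piece. Otherwise pick, among the components of the
sets `S - x` (`x ∈ S`) with more than `m` vertices, one of least size, `C`. As the graph is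
acyclic, `C` hangs from `x` by a single vertex `u`, so the components of `C - u` are components of
`S - u` and, by minimality, have at most `m` vertices each. Grouping them greedily into unions of
`m` to `3m - 1` vertices and adding `u` to every group covers `C` by connected pieces with `m + 1`
to `3m` vertices that pairwise meet only in `u`. The rest `S \ C` is connected; if it has more
than `m` vertices we recurse on it, otherwise every component of `S - u` is small and the grouping
around `u` covers all of `S`. (If there is no such `C` at all, group around any vertex.)
For the theorem take `m = max (s - 1) 1`.
-/

open Finset

section Saturated

variable {α : Type*} {r : α → α → Prop}

def IsSaturated (r : α → α → Prop) (W : Finset α) : Prop :=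
  ∀ w ∈ W, ∀ z, r w z → z ∈ W

lemma IsSaturated.sdiff [DecidableEq α] [Std.Symm r] {U W : Finset α} (hU : IsSaturated r U)
    (hW : IsSaturated r W) : IsSaturated r (U \ W) := by
  intro u hu z huz
  rw [mem_sdiff] at hu ⊢
  exact ⟨hU u hu.1 z huz, fun hz => hu.2 (hW z hz u (symm_of r huz))⟩

lemma IsSaturated.filter [DecidableRel r] [IsTrans α r] {W : Finset α}
    (hW : IsSaturated r W) (w : α) : IsSaturated r (W.filter (r w)) := by
  intro u hu z huz
  rw [mem_filter] at hu ⊢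
  exact ⟨hW u hu.1 z huz, trans_of r hu.2 huz⟩

theorem exists_finpartition_isSaturated [DecidableEq α] [DecidableRel r] [Std.Symm r]
    [IsTrans α r] {m : ℕ} (hm : 0 < m) (U : Finset α) (hrefl : ∀ u ∈ U, r u u)
    (hU : IsSaturated r U) (hclass : ∀ u ∈ U, #(U.filter (r u)) ≤ m) (hmU : m ≤ #U) :
    ∃ P : Finpartition U, ∀ W ∈ P.parts, IsSaturated r W ∧ m ≤ #W ∧ #W < 3 * m := by
  classical
  induction hn : #U using Nat.strong_induction_on generalizing U with
  | _ n ih =>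
  subst hn
  by_cases hsmall : #U < 3 * m
  · refine ⟨Finpartition.indiscrete (by rintro rfl; simp at hmU; omega), ?_⟩
    simp only [Finpartition.indiscrete_parts, mem_singleton, forall_eq]
    exact ⟨hU, hmU, hsmall⟩
  -- removing a class from a minimal saturated `W ⊆ U` with `m ≤ #W` leaves fewer than `m`
  -- elements, so `#W < 2m`
  obtain ⟨W, hWmem, hWmin⟩ := exists_min_image
    (U.powerset.filter fun W => IsSaturated r W ∧ m ≤ #W) card ⟨U, by simp [hU, hmU]⟩
  simp only [mem_filter, mem_powerset] at hWmem hWmin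
  obtain ⟨hWU, hW, hmW⟩ := hWmem
  obtain ⟨w, hw⟩ := card_pos.1 (hm.trans_le hmW)
  have hrest : #(W \ W.filter (r w)) < m := by
    by_contra! h
    have := hWmin _ ⟨sdiff_subset.trans hWU, hW.sdiff (hW.filter w), h⟩
    have := card_lt_card
      (sdiff_ssubset (filter_subset _ W) ⟨w, mem_filter.2 ⟨hw, hrefl w (hWU hw)⟩⟩)
    omega
  have hWcard : #W < 2 * m := by
    have := card_sdiff_add_card_inter W (W.filter (r w))
    rw [inter_eq_right.2 (filter_subset _ W)] at this
    have := (card_le_card (filter_subset_filter _ hWU)).trans (hclass w (hWU hw))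
    omega
  have := card_sdiff_of_subset hWU
  have := card_le_card hWU
  obtain ⟨P, hP⟩ := ih _ (by omega) (U \ W) (fun u hu => hrefl u (mem_sdiff.1 hu).1)
    (hU.sdiff hW)
    (fun u hu => (card_le_card (filter_subset_filter _ sdiff_subset)).trans
      (hclass u (mem_sdiff.1 hu).1)) (by omega) rfl
  refine ⟨P.extend (b := W) (ne_empty_of_mem hw) disjoint_sdiff_self_left
    (sdiff_union_of_subset hWU), ?_⟩
  simp only [Finpartition.extend_parts, mem_insert, forall_eq_or_imp]
  exact ⟨⟨hW, hmW, by omega⟩, hP⟩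

end Saturated

section AlmostPartition

variable {α : Type*} [DecidableEq α]

def IsAlmostPartition (𝒜 : Finset (Finset α)) (S : Finset α) : Prop :=
  𝒜.sup id = S ∧ ∀ P ∈ 𝒜, #(P ∩ (𝒜.erase P).sup id) ≤ 1

lemma isAlmostPartition_singleton (S : Finset α) : IsAlmostPartition {S} S := by
  simp [IsAlmostPartition]

lemma IsAlmostPartition.union {𝒜 ℬ : Finset (Finset α)} {S₁ S₂ : Finset α}
    (h₁ : IsAlmostPartition 𝒜 S₁) (h₂ : IsAlmostPartition ℬ S₂) (hS : Disjoint S₁ S₂) :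
    IsAlmostPartition (𝒜 ∪ ℬ) (S₁ ∪ S₂) := by
  refine ⟨by rw [sup_union, h₁.1, h₂.1]; rfl, ?_⟩
  have key : ∀ {𝒞 𝒟 : Finset (Finset α)} {T T' : Finset α}, IsAlmostPartition 𝒞 T →
      𝒟.sup id = T' → Disjoint T T' → ∀ P ∈ 𝒞, #(P ∩ ((𝒞 ∪ 𝒟).erase P).sup id) ≤ 1 := by
    intro 𝒞 𝒟 T T' h h' hd P hP
    refine (card_le_card fun x hx => ?_).trans (h.2 P hP)
    simp only [mem_inter, mem_sup, mem_erase, mem_union, id] at hx ⊢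
    obtain ⟨hxP, Q, ⟨hQP, hQ⟩, hxQ⟩ := hx
    refine ⟨hxP, Q, ⟨hQP, hQ.resolve_right fun hQ => ?_⟩, hxQ⟩
    exact disjoint_left.1 hd (h.1 ▸ le_sup (f := id) hP hxP) (h' ▸ le_sup (f := id) hQ hxQ)
  intro P hP
  rcases mem_union.1 hP with hP | hP
  · exact key h₁ h₂.1 hS P hP
  · rw [union_comm]; exact key h₂ h₁.1 hS.symm P hP

lemma Finpartition.isAlmostPartition_image_insert {U : Finset α} (Q : Finpartition U) {v : α}
    (hv : v ∉ U) (hU : U.Nonempty) :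
    IsAlmostPartition (Q.parts.image (insert v)) (insert v U) := by
  refine ⟨?_, ?_⟩
  · obtain ⟨W₀, hW₀⟩ := Q.parts_nonempty hU.ne_empty
    ext x
    simp only [mem_sup, mem_image, id, mem_insert]
    constructor
    · rintro ⟨_, ⟨W, hW, rfl⟩, hx⟩
      exact (mem_insert.1 hx).imp_right fun hx => Q.le hW hx
    · rintro (rfl | hx)
      · exact ⟨_, ⟨W₀, hW₀, rfl⟩, mem_insert_self _ _⟩
      · obtain ⟨W, hW, hxW⟩ := mem_sup.1 (Q.sup_parts.symm ▸ hx : x ∈ Q.parts.sup id)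
        exact ⟨_, ⟨W, hW, rfl⟩, mem_insert_of_mem hxW⟩
  · simp only [mem_image, forall_exists_index, and_imp, forall_apply_eq_imp_iff₂]
    intro W hW
    refine (card_le_card fun x hx => ?_).trans (card_singleton v).le
    simp only [mem_inter, mem_sup, mem_erase, mem_image, id] at hx
    obtain ⟨hxW, _, ⟨hne, W', hW', rfl⟩, hxW'⟩ := hx
    rw [mem_singleton]
    by_contra hxv
    have hWW' : W ≠ W' := by rintro rfl; exact hne rfl
    exact disjoint_left.1 (Q.disjoint hW hW' hWW') ((mem_insert.1 hxW).resolve_left hxv)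
      ((mem_insert.1 hxW').resolve_left hxv)

lemma IsAlmostPartition.exists_fin {𝒜 : Finset (Finset α)} {S : Finset α}
    (h : IsAlmostPartition 𝒜 S) :
    ∃ (k : ℕ) (A : Fin k → Finset α), (∀ i, A i ∈ 𝒜) ∧ univ.biUnion A = S ∧
      ∀ j, #(A j ∩ (univ.filter fun i => i ≠ j).biUnion A) ≤ 1 := by
  set e := 𝒜.equivFin
  have hinj : Function.Injective fun i => (e.symm i : Finset α) :=
    Subtype.val_injective.comp e.symm.injective
  refine ⟨#𝒜, fun i => e.symm i, fun i => (e.symm i).2, ?_, fun j => ?_⟩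
  · rw [← h.1]
    ext x
    simp only [mem_biUnion, mem_univ, true_and, mem_sup, id]
    exact ⟨fun ⟨i, hx⟩ => ⟨_, (e.symm i).2, hx⟩,
      fun ⟨P, hP, hx⟩ => ⟨e ⟨P, hP⟩, by simpa using hx⟩⟩
  · refine (card_le_card (inter_subset_inter_left fun x hx => ?_)).trans (h.2 _ (e.symm j).2)
    simp only [mem_biUnion, mem_filter, mem_univ, true_and] at hx
    obtain ⟨i, hij, hx⟩ := hx
    exact mem_sup.2 ⟨_, mem_erase.2 ⟨fun h => hij (hinj h), (e.symm i).2⟩, hx⟩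

end AlmostPartition

namespace SimpleGraph

variable {V : Type*} (G : SimpleGraph V)

def ReachableIn (S : Finset V) (u w : V) : Prop :=
  ∃ p : G.Walk u w, ∀ x ∈ p.support, x ∈ S

variable {G} {S S' W : Finset V} {u v w x y : V}

namespace ReachableIn

lemma refl (hu : u ∈ S) : G.ReachableIn S u u := ⟨.nil, by simpa⟩

lemma of_adj (hu : u ∈ S) (hw : w ∈ S) (h : G.Adj u w) : G.ReachableIn S u w :=
  ⟨.cons h .nil, by simp [hu, hw]⟩

lemma mem_right (h : G.ReachableIn S u w) : w ∈ S :=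
  h.elim fun p hp => hp w p.end_mem_support

lemma symm (h : G.ReachableIn S u w) : G.ReachableIn S w u :=
  h.elim fun p hp => ⟨p.reverse, by simpa using hp⟩

lemma mem_left (h : G.ReachableIn S u w) : u ∈ S := h.symm.mem_right

lemma trans (h : G.ReachableIn S u v) (h' : G.ReachableIn S v w) : G.ReachableIn S u w := by
  obtain ⟨p, hp⟩ := h
  obtain ⟨q, hq⟩ := h'
  refine ⟨p.append q, fun x hx => ?_⟩
  rcases (Walk.mem_support_append_iff _ _).1 hx with hx | hx
  exacts [hp x hx, hq x hx]

lemma mono (h : G.ReachableIn S u w) (hS : S ⊆ S') : G.ReachableIn S' u w :=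
  h.elim fun p hp => ⟨p, fun x hx => hS (hp x hx)⟩

instance : Std.Symm (G.ReachableIn S) := ⟨fun _ _ => symm⟩

instance : IsTrans V (G.ReachableIn S) := ⟨fun _ _ _ => trans⟩

lemma exists_adj_of_ne [DecidableEq V] (h : G.ReachableIn S w v) (hwv : w ≠ v) :
    ∃ a, G.Adj a v ∧ G.ReachableIn (S.erase v) w a := by
  obtain ⟨p, hp⟩ := h
  induction p with
  | nil => exact absurd rfl hwv
  | @cons w b v hwb q ih =>
    have hw : w ∈ S.erase v := mem_erase.2 ⟨hwv, hp w (by simp)⟩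
    by_cases hbv : b = v
    · subst hbv
      exact ⟨w, hwb, refl hw⟩
    · obtain ⟨a, hav, hba⟩ := ih hbv (fun x hx => hp x (by simp [hx]))
      exact ⟨a, hav, (of_adj hw (mem_erase.2 ⟨hbv, hp b (by simp)⟩) hwb).trans hba⟩

lemma of_isSaturated (hW : IsSaturated (G.ReachableIn S) W) (hw : w ∈ W)
    (h : G.ReachableIn S w x) : G.ReachableIn W w x := by
  classical
  obtain ⟨p, hp⟩ := h
  refine ⟨p, fun y hy => hW w hw y ⟨p.takeUntil y hy, fun z hz => hp z ?_⟩⟩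
  exact p.support_takeUntil_subset_support hy hz

lemma erase_or [DecidableEq V] (h : G.ReachableIn S w v) (x : V) :
    G.ReachableIn (S.erase x) w v ∨ G.ReachableIn S w x := by
  obtain ⟨p, hp⟩ := h
  by_cases hx : x ∈ p.support
  · exact .inr ⟨p.takeUntil x hx, fun z hz => hp z (p.support_takeUntil_subset_support hx hz)⟩
  · exact .inl ⟨p, fun z hz => mem_erase.2 ⟨fun h => hx (h ▸ hz), hp z hz⟩⟩

end ReachableIn

lemma isSaturated_reachableIn : IsSaturated (G.ReachableIn S) S :=
  fun _ _ _ h => h.mem_right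

lemma connected_induce_iff_reachableIn :
    (G.induce (S : Set V)).Connected ↔ S.Nonempty ∧ ∀ u ∈ S, ∀ w ∈ S, G.ReachableIn S u w := by
  rw [connected_induce_iff, Subgraph.connected_iff_forall_exists_walk_subgraph]
  simp only [Subgraph.induce_verts, coe_nonempty, mem_coe]
  refine and_congr_right fun _ => ⟨fun h u hu w hw => ?_, fun h u w hu hw => ?_⟩
  · obtain ⟨p, hp⟩ := h hu hw
    exact ⟨p, fun x hx => Subgraph.verts_mono hp (p.verts_toSubgraph ▸ hx)⟩
  · obtain ⟨p, hp⟩ := h u hu w hw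
    exact ⟨p, p.toSubgraph_le_induce_support.trans (Subgraph.induce_mono_right hp)⟩

lemma Connected.induce_insert [DecidableEq V] (hS : (G.induce (S : Set V)).Connected)
    (hv : v ∈ S) (hWS : W ⊆ S.erase v)
    (hW : IsSaturated (G.ReachableIn (S.erase v)) W) :
    (G.induce (insert v W : Finset V)).Connected := by
  rw [connected_induce_iff_reachableIn] at hS ⊢
  have hv' : v ∈ insert v W := mem_insert_self v W
  have to_v : ∀ w ∈ insert v W, G.ReachableIn (insert v W) w v := by
    intro w hw
    rcases mem_insert.1 hw with rfl | hw
    · exact .refl hv'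
    obtain ⟨a, hav, hwa⟩ := (hS.2 w (mem_of_mem_erase (hWS hw)) v hv).exists_adj_of_ne
      (ne_of_mem_erase (hWS hw))
    have hwa := (hwa.of_isSaturated hW hw).mono (subset_insert v W)
    exact hwa.trans (.of_adj hwa.mem_right hv' hav)
  exact ⟨⟨v, hv'⟩, fun u hu w hw => (to_v u hu).trans (to_v w hw).symm⟩

lemma IsAcyclic.eq_of_adj_of_reachableIn (hG : G.IsAcyclic) (hx : x ∉ S)
    (h : G.ReachableIn S u w) (hu : G.Adj x u) (hw : G.Adj x w) : u = w := by
  classical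
  obtain ⟨p, hp⟩ := h
  have hpath : (Walk.cons hu p.bypass).IsPath :=
    p.bypass_isPath.cons fun hx' => hx (hp x (p.support_bypass_subset_support hx'))
  simpa using (hG.eq_snd_of_adj_start hpath hw (by simp)).symm

open Classical in
noncomputable def componentIn (S : Finset V) (y : V) : Finset V := S.filter (G.ReachableIn S y)

lemma mem_componentIn : w ∈ G.componentIn S u ↔ G.ReachableIn S u w := by
  simp only [componentIn, mem_filter, and_iff_right_iff_imp]
  exact ReachableIn.mem_right

lemma mem_of_mem_componentIn (h : w ∈ G.componentIn S u) : u ∈ S :=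
  (mem_componentIn.1 h).mem_left

lemma isSaturated_componentIn : IsSaturated (G.ReachableIn S) (G.componentIn S u) :=
  fun _ hw _ h => mem_componentIn.2 ((mem_componentIn.1 hw).trans h)

lemma _root_.IsSaturated.componentIn_subset (hW : IsSaturated (G.ReachableIn S) W)
    (hw : w ∈ W) : G.componentIn S w ⊆ W :=
  fun _ hz => hW w hw _ (mem_componentIn.1 hz)

/-- `u` is a neighbour of `x` in the component `C` of `y` in `S - x`; acyclicity makes it the
only one, so a walk from `C - u` that avoids `u` cannot reach `x` and stays in `C`. -/
lemma IsAcyclic.exists_isSaturated_componentIn_erase [DecidableEq V] (hG : G.IsAcyclic)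
    (hS : (G.induce (S : Set V)).Connected) (hx : x ∈ S) (hy : y ∈ S.erase x) :
    ∃ u ∈ G.componentIn (S.erase x) y,
      IsSaturated (G.ReachableIn (S.erase u)) ((G.componentIn (S.erase x) y).erase u) := by
  obtain ⟨u, hux, hyu⟩ := ((connected_induce_iff_reachableIn.1 hS).2 y (mem_of_mem_erase hy)
    x hx).exists_adj_of_ne (ne_of_mem_erase hy)
  refine ⟨u, mem_componentIn.2 hyu, fun w hw z hwz => ?_⟩
  have hyw := mem_componentIn.1 (mem_of_mem_erase hw)
  rcases hwz.erase_or x with hwz' | hwx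
  · refine mem_erase.2 ⟨ne_of_mem_erase hwz.mem_right, mem_componentIn.2 (hyw.trans ?_)⟩
    exact hwz'.mono (erase_subset_erase x (erase_subset u S))
  · obtain ⟨a, hax, hwa⟩ := hwx.exists_adj_of_ne (ne_of_mem_erase hyw.mem_right)
    have hua : G.ReachableIn (S.erase x) u a :=
      hyu.symm.trans (hyw.trans (hwa.mono (erase_subset_erase x (erase_subset u S))))
    have hau : a ≠ u := ne_of_mem_erase (mem_of_mem_erase hwa.mem_right)
    exact absurd (hG.eq_of_adj_of_reachableIn (notMem_erase x S) hua hux.symm hax.symm) hau.symm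

lemma Connected.induce_sdiff_componentIn_erase [DecidableEq V]
    (hS : (G.induce (S : Set V)).Connected) (hx : x ∈ S) (y : V) :
    (G.induce (S \ G.componentIn (S.erase x) y : Finset V)).Connected := by
  have hxC : x ∉ G.componentIn (S.erase x) y :=
    fun h => notMem_erase x S (mem_componentIn.1 h).mem_right
  have : S \ G.componentIn (S.erase x) y =
      insert x (S.erase x \ G.componentIn (S.erase x) y) := by
    ext z
    by_cases hz : z = x <;> simp [hz, hx, hxC]
  rw [this]
  exact hS.induce_insert hx sdiff_subset (isSaturated_reachableIn.sdiff isSaturated_componentIn)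

lemma exists_min_card_componentIn_erase {m : ℕ} [DecidableEq V]
    (h : ∃ x ∈ S, ∃ y, m < #(G.componentIn (S.erase x) y)) :
    ∃ x ∈ S, ∃ y ∈ S.erase x, m < #(G.componentIn (S.erase x) y) ∧
      ∀ x' ∈ S, ∀ y', m < #(G.componentIn (S.erase x') y') →
        #(G.componentIn (S.erase x) y) ≤ #(G.componentIn (S.erase x') y') := by
  classical
  have hy : ∀ {x y}, m < #(G.componentIn (S.erase x) y) → y ∈ S.erase x := fun h =>
    have ⟨_, hz⟩ := card_pos.1 (m.zero_le.trans_lt h)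
    mem_of_mem_componentIn hz
  obtain ⟨x, hx, y, hxy⟩ := h
  obtain ⟨⟨x, y⟩, hmem, hmin⟩ := exists_min_image
    ((S ×ˢ S).filter fun p => m < #(G.componentIn (S.erase p.1) p.2))
    (fun p => #(G.componentIn (S.erase p.1) p.2))
    ⟨(x, y), mem_filter.2 ⟨mem_product.2 ⟨hx, mem_of_mem_erase (hy hxy)⟩, hxy⟩⟩
  simp only [mem_filter, mem_product] at hmem hmin
  exact ⟨x, hmem.1.1, y, hy hmem.2, hmem.2, fun x' hx' y' h' =>
    hmin (x', y') ⟨⟨hx', mem_of_mem_erase (hy h')⟩, h'⟩⟩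

lemma IsAcyclic.exists_root_of_min_card_componentIn_erase [DecidableEq V] (hG : G.IsAcyclic)
    (hS : (G.induce (S : Set V)).Connected) (hx : x ∈ S) (hy : y ∈ S.erase x) {m : ℕ}
    (hmin : ∀ x' ∈ S, ∀ y', m < #(G.componentIn (S.erase x') y') →
      #(G.componentIn (S.erase x) y) ≤ #(G.componentIn (S.erase x') y')) :
    ∃ u ∈ G.componentIn (S.erase x) y,
      IsSaturated (G.ReachableIn (S.erase u)) ((G.componentIn (S.erase x) y).erase u) ∧
      (∀ w ∈ (G.componentIn (S.erase x) y).erase u, #(G.componentIn (S.erase u) w) ≤ m) ∧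
      ∀ w ∈ S.erase u, w ∉ G.componentIn (S.erase x) y →
        G.componentIn (S.erase u) w ⊆ S \ G.componentIn (S.erase x) y := by
  obtain ⟨u, huC, hsat⟩ := hG.exists_isSaturated_componentIn_erase hS hx hy
  set C := G.componentIn (S.erase x) y
  refine ⟨u, huC, hsat, fun w hw => ?_, fun w hw hwC => ?_⟩
  · by_contra! h
    have := hmin u (mem_of_mem_erase (mem_componentIn.1 huC).mem_right) w h
    have := card_le_card (hsat.componentIn_subset hw)
    have := card_erase_of_mem huC
    have := card_pos.2 ⟨u, huC⟩
    omega
  · refine ((isSaturated_reachableIn.sdiff hsat).componentIn_subset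
      (mem_sdiff.2 ⟨hw, fun h => hwC (mem_of_mem_erase h)⟩)).trans fun z hz => ?_
    simp only [mem_sdiff, mem_erase] at hz ⊢
    exact ⟨hz.1.2, fun h => hz.2 ⟨hz.1.1, h⟩⟩

lemma Connected.exists_isAlmostPartition_insert [DecidableEq V]
    (hS : (G.induce (S : Set V)).Connected) (hv : v ∈ S) {U : Finset V} (hUS : U ⊆ S.erase v)
    (hU : IsSaturated (G.ReachableIn (S.erase v)) U) {m : ℕ} (hm : 0 < m)
    (hclass : ∀ w ∈ U, #(G.componentIn (S.erase v) w) ≤ m) (hmU : m ≤ #U) :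
    ∃ 𝒜 : Finset (Finset V), IsAlmostPartition 𝒜 (insert v U) ∧
      ∀ P ∈ 𝒜, (G.induce (P : Set V)).Connected ∧ m < #P ∧ #P ≤ 3 * m := by
  classical
  obtain ⟨Q, hQ⟩ := exists_finpartition_isSaturated hm U (fun w hw => .refl (hUS hw)) hU
    (fun w hw => (card_le_card fun z hz => mem_componentIn.2 (mem_filter.1 hz).2).trans
      (hclass w hw)) hmU
  have hvU : v ∉ U := fun h => notMem_erase v S (hUS h)
  refine ⟨Q.parts.image (insert v), Q.isAlmostPartition_image_insert hvU
    (card_pos.1 (hm.trans_le hmU)), ?_⟩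
  simp only [mem_image, forall_exists_index, and_imp, forall_apply_eq_imp_iff₂]
  intro W hW
  obtain ⟨hWsat, hmW, hW3⟩ := hQ W hW
  rw [card_insert_of_notMem fun h => hvU (Q.le hW h)]
  exact ⟨hS.induce_insert hv ((Q.le hW).trans hUS) hWsat, by omega, by omega⟩

theorem IsAcyclic.exists_isAlmostPartition [DecidableEq V] (hG : G.IsAcyclic) {m : ℕ}
    (hm : 0 < m) (S : Finset V) (hS : (G.induce (S : Set V)).Connected) (hmS : m < #S) :
    ∃ 𝒜 : Finset (Finset V), IsAlmostPartition 𝒜 S ∧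
      ∀ P ∈ 𝒜, (G.induce (P : Set V)).Connected ∧ m < #P ∧ #P ≤ 3 * m := by
  induction hn : #S using Nat.strong_induction_on generalizing S with
  | _ n ih =>
  subst hn
  by_cases hsmall : #S ≤ 3 * m
  · exact ⟨{S}, isAlmostPartition_singleton S, by simp [hS, hmS, hsmall]⟩
  by_cases hbranch : ∀ x ∈ S, ∀ y, #(G.componentIn (S.erase x) y) ≤ m
  · obtain ⟨x, hx⟩ := card_pos.1 (hm.trans hmS)
    have := card_erase_of_mem hx
    simpa [insert_erase hx] using hS.exists_isAlmostPartition_insert hx subset_rfl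
      isSaturated_reachableIn hm (fun w _ => hbranch x hx w) (by omega)
  push Not at hbranch
  obtain ⟨x, hx, y, hy, hmC, hmin⟩ := exists_min_card_componentIn_erase hbranch
  obtain ⟨u, huC, hsat, hclassC, hclassR⟩ :=
    hG.exists_root_of_min_card_componentIn_erase hS hx hy hmin
  set C := G.componentIn (S.erase x) y
  have hCS : C ⊆ S := fun z hz => mem_of_mem_erase (mem_componentIn.1 hz).mem_right
  have huS := hCS huC
  by_cases hR : m < #(S \ C)
  · obtain ⟨𝒜, h𝒜, hP⟩ := ih _ (card_lt_card (sdiff_ssubset hCS ⟨u, huC⟩)) (S \ C)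
      (hS.induce_sdiff_componentIn_erase hx y) hR rfl
    have := card_erase_of_mem huC
    obtain ⟨ℬ, hℬ, hQ⟩ := hS.exists_isAlmostPartition_insert huS (erase_subset_erase u hCS) hsat
      hm hclassC (by omega)
    rw [insert_erase huC] at hℬ
    refine ⟨ℬ ∪ 𝒜, union_sdiff_of_subset hCS ▸ hℬ.union h𝒜 disjoint_sdiff, ?_⟩
    simp only [mem_union]
    rintro P (hP' | hP')
    exacts [hQ P hP', hP P hP']
  · have hclass : ∀ w ∈ S.erase u, #(G.componentIn (S.erase u) w) ≤ m := fun w hw => by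
      by_cases hwC : w ∈ C
      · exact hclassC w (mem_erase.2 ⟨ne_of_mem_erase hw, hwC⟩)
      · have := card_le_card (hclassR w hw hwC)
        omega
    have := card_erase_of_mem huS
    simpa [insert_erase huS] using hS.exists_isAlmostPartition_insert huS subset_rfl
      isSaturated_reachableIn hm hclass (by omega)

end SimpleGraph

/-- Fact 3.8: every finite tree with at least `s` vertices admits an
almost-partition of its vertex set into connected pieces of size in `[s, 3s]`. -/
theorem tree_almost_partition {V : Type*} [Fintype V] [DecidableEq V]
    (T : SimpleGraph V) (hT : T.IsTree) (s : ℕ) (hs : 0 < s)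
    (hcard : s ≤ Fintype.card V) :
    ∃ (k : ℕ) (A : Fin k → Finset V),
      (∀ i, (A i).Nonempty) ∧
      (Finset.univ.biUnion A = Finset.univ) ∧
      (∀ j, (A j ∩ (Finset.univ.filter (fun i => i ≠ j)).biUnion A).card ≤ 1) ∧
      (∀ i, (T.induce (↑(A i) : Set V)).Connected) ∧
      (∀ i, s ≤ (A i).card ∧ (A i).card ≤ 3 * s) := by
  have hconn : (T.induce ((univ : Finset V) : Set V)).Connected := by
    rw [coe_univ]
    exact (SimpleGraph.induceUnivIso T).connected_iff.2 hT.connected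
  obtain ⟨𝒜, h𝒜, hP⟩ : ∃ 𝒜 : Finset (Finset V), IsAlmostPartition 𝒜 univ ∧
      ∀ P ∈ 𝒜, (T.induce (P : Set V)).Connected ∧ s ≤ #P ∧ #P ≤ 3 * s := by
    by_cases hsmall : Fintype.card V ≤ 3 * s
    · exact ⟨{univ}, isAlmostPartition_singleton univ, by simp [hconn, hcard, hsmall]⟩
    -- `m = s - 1` would be `0` for `s = 1`, and the grouping needs `m ≥ 1`
    obtain ⟨𝒜, h𝒜, hP⟩ := hT.isAcyclic.exists_isAlmostPartition (m := max (s - 1) 1)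
      (by omega) univ hconn (by rw [card_univ]; omega)
    exact ⟨𝒜, h𝒜, fun P hP' => (hP P hP').imp_right fun h => ⟨by omega, by omega⟩⟩
  obtain ⟨k, A, hA, hcover, hinter⟩ := h𝒜.exists_fin
  exact ⟨k, A, fun i => card_pos.1 (hs.trans_le (hP _ (hA i)).2.1), hcover, hinter,
    fun i => (hP _ (hA i)).1, fun i => (hP _ (hA i)).2⟩
end

section
/- For every finite simple graph G = (V, E) with |V| = n and every integer s ≥ 1, the edge set E can be partitioned into two sets E_A and E_B (E_A ∪ E_B = E, E_A ∩ E_B = ∅) such that: (a) both endpoints of every edge in E_B have degree less than s in G; and (b) there exists a family of pairwise disjoint subsets of V, each of size greater than s (hence the family has at most n/s members), each inducing a connected subgraph of the spanning subgraph (V, E_A), whose union contains every endpoint of every edge of E_A. -/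
open SimpleGraph

/-- The subgraph induced on the support of a connected component is connected. -/
lemma induce_supp_connected_aux {V : Type*} (H : SimpleGraph V)
    (c : H.ConnectedComponent) : (H.induce c.supp).Connected := by
  classical
  obtain ⟨u, rfl⟩ := c.exists_rep
  have hu : u ∈ (H.connectedComponentMk u).supp := rfl
  apply H.induce_connected_of_patches u hu
  intro v hv
  have hreach : H.Reachable u v := by
    rw [ConnectedComponent.mem_supp_iff] at hv
    exact (ConnectedComponent.eq.mp hv.symm)
  obtain ⟨p⟩ := hreach
  refine ⟨{x | x ∈ p.support}, ?_, p.start_mem_support, p.end_mem_support, ?_⟩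
  · intro x hx
    have : H.Reachable u x := ⟨p.takeUntil x hx⟩
    rw [ConnectedComponent.mem_supp_iff]
    exact (ConnectedComponent.sound this).symm
  · exact (p.connected_induce_support).preconnected _ _

/-- Sparsification Phase (Lemma 3.2 + Fact 3.3, existence form): the edge set of
any finite simple graph splits into `E_A` and `E_B` such that every edge of
`E_B` has both endpoints of degree `< s`, and the endpoints of edges of `E_A`
are covered by pairwise disjoint connected (in `(V, E_A)`) sets of size `> s`,
hence at most `n / s` of them. -/
theorem sparsification_phase {V : Type*} [Fintype V] [DecidableEq V]
    (G : SimpleGraph V) [DecidableRel G.Adj] (n s : ℕ)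
    (hn : Fintype.card V = n) (hs : 1 ≤ s) :
    ∃ EA EB : Set (Sym2 V),
      EA ∪ EB = G.edgeSet ∧ EA ∩ EB = ∅ ∧
      (∀ e ∈ EB, ∀ v ∈ e, G.degree v < s) ∧
      ∃ 𝒞 : Finset (Finset V),
        (∀ C ∈ 𝒞, ∀ D ∈ 𝒞, C ≠ D → Disjoint C D) ∧
        (∀ C ∈ 𝒞, s < C.card) ∧
        𝒞.card ≤ n / s ∧
        (∀ C ∈ 𝒞, ((SimpleGraph.fromEdgeSet EA).induce (↑C : Set V)).Connected) ∧
        (∀ e ∈ EA, ∀ v ∈ e, ∃ C ∈ 𝒞, v ∈ C) := by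
  classical
  set EA : Set (Sym2 V) := {e | e ∈ G.edgeSet ∧ ∃ v ∈ e, s ≤ G.degree v} with hEA
  set EB : Set (Sym2 V) := {e | e ∈ G.edgeSet ∧ ∀ v ∈ e, G.degree v < s} with hEB
  set H : SimpleGraph V := SimpleGraph.fromEdgeSet EA with hH
  -- key fact: a vertex of large degree has all its `G`-edges in `EA`
  have hbig : ∀ w : V, s ≤ G.degree w → ∀ u : V, G.Adj w u → H.Adj w u := by
    intro w hw u hadj
    rw [hH, SimpleGraph.fromEdgeSet_adj]
    exact ⟨⟨G.mem_edgeSet.mpr hadj, w, Sym2.mem_mk_left w u, hw⟩, G.ne_of_adj hadj⟩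
  set 𝒞 : Finset (Finset V) :=
    (Finset.univ.image (fun c : H.ConnectedComponent => c.supp.toFinset)).filter
      (fun C => s < C.card) with h𝒞
  refine ⟨EA, EB, ?_, ?_, ?_, 𝒞, ?_, ?_, ?_, ?_, ?_⟩
  · ext e
    simp only [hEA, hEB, Set.mem_union, Set.mem_setOf_eq]
    constructor
    · rintro (⟨h, _⟩ | ⟨h, _⟩) <;> exact h
    · intro he
      by_cases hc : ∃ v ∈ e, s ≤ G.degree v
      · exact Or.inl ⟨he, hc⟩
      · push_neg at hc
        exact Or.inr ⟨he, hc⟩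
  · rw [Set.eq_empty_iff_forall_notMem]
    rintro e ⟨⟨_, v, hv, hdeg⟩, _, hall⟩
    exact absurd (hall v hv) (not_lt.mpr hdeg)
  · rintro e ⟨_, hall⟩ v hv
    exact hall v hv
  · -- pairwise disjoint
    intro C hC D hD hne
    simp only [h𝒞, Finset.mem_filter, Finset.mem_image, Finset.mem_univ, true_and] at hC hD
    obtain ⟨⟨c, rfl⟩, _⟩ := hC
    obtain ⟨⟨d, rfl⟩, _⟩ := hD
    have hcd : c ≠ d := fun h => hne (by rw [h])
    exact Set.disjoint_toFinset.mpr (pairwise_disjoint_supp_connectedComponent H hcd)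
  · -- size
    intro C hC
    simp only [h𝒞, Finset.mem_filter] at hC
    exact hC.2
  · -- number of sets
    rw [Nat.le_div_iff_mul_le hs]
    have hdisj : ∀ C ∈ 𝒞, ∀ D ∈ 𝒞, C ≠ D → Disjoint C D := by
      intro C hC D hD hne
      simp only [h𝒞, Finset.mem_filter, Finset.mem_image, Finset.mem_univ, true_and] at hC hD
      obtain ⟨⟨c, rfl⟩, _⟩ := hC
      obtain ⟨⟨d, rfl⟩, _⟩ := hD
      have hcd : c ≠ d := fun h => hne (by rw [h])
      exact Set.disjoint_toFinset.mpr (pairwise_disjoint_supp_connectedComponent H hcd)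
    calc 𝒞.card * s ≤ ∑ C ∈ 𝒞, C.card := by
            rw [← smul_eq_mul]
            exact Finset.card_nsmul_le_sum 𝒞 _ s (fun C hC => by
              simp only [h𝒞, Finset.mem_filter] at hC; exact hC.2.le)
      _ = (𝒞.biUnion id).card := (Finset.card_biUnion (fun C hC D hD h => hdisj C hC D hD h)).symm
      _ ≤ Fintype.card V := Finset.card_le_univ _
      _ = n := hn
  · -- connectedness
    intro C hC
    simp only [h𝒞, Finset.mem_filter, Finset.mem_image, Finset.mem_univ, true_and] at hC
    obtain ⟨⟨c, rfl⟩, _⟩ := hC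
    rw [Set.coe_toFinset]
    exact induce_supp_connected_aux H c
  · -- coverage
    rintro e ⟨he, w, hw, hdeg⟩ v hv
    set c := H.connectedComponentMk w with hc
    have hvc : v ∈ c.supp := by
      rcases eq_or_ne v w with rfl | hne
      · rfl
      · have hewv : e = s(w, v) := ((Sym2.mem_and_mem_iff hne.symm).mp ⟨hw, hv⟩)
        have hadj : G.Adj w v := G.mem_edgeSet.mp (hewv ▸ he)
        have : H.Adj w v := hbig w hdeg v hadj
        rw [ConnectedComponent.mem_supp_iff]
        exact (ConnectedComponent.sound this.reachable.symm)
    refine ⟨c.supp.toFinset, ?_, Set.mem_toFinset.mpr hvc⟩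
    simp only [h𝒞, Finset.mem_filter, Finset.mem_image, Finset.mem_univ, true_and]
    refine ⟨⟨c, rfl⟩, ?_⟩
    have hsub : insert w (G.neighborFinset w) ⊆ c.supp.toFinset := by
      intro u hu
      rw [Finset.mem_insert] at hu
      rw [Set.mem_toFinset, ConnectedComponent.mem_supp_iff]
      rcases hu with rfl | hu
      · rfl
      · have : H.Adj w u := hbig w hdeg u ((G.mem_neighborFinset w u).mp hu)
        exact (ConnectedComponent.sound this.reachable.symm)
    calc s < s + 1 := Nat.lt_succ_self s
      _ ≤ G.degree w + 1 := Nat.add_le_add_right hdeg 1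
      _ = (insert w (G.neighborFinset w)).card := by
            rw [Finset.card_insert_of_notMem (by simp), G.card_neighborFinset_eq_degree]
      _ ≤ c.supp.toFinset.card := Finset.card_le_card hsub
end

section
/- Let G be a finite simple graph on vertex set V, let s be a positive integer, and let ≺ be a linear order on V such that deg_G(u) < deg_G(v) implies u ≺ v. For every non-isolated vertex v let f(v) be the ≺-greatest element of the neighborhood N_G(v). Let H be any simple graph on V whose edge set contains the edge {v, f(v)} for every non-isolated vertex v of G. If u ∈ V is a vertex such that every vertex in the connected component of u in H has degree less than s in G, then every neighbor of u in G has degree less than s in G. -/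
/-- Fact 3.3 (ii): if each vertex points to its `≺`-greatest neighbor (where `≺`
refines the degree order) and `H` contains all these pointer edges, then a
vertex whose whole `H`-component consists of vertices of `G`-degree `< s` has
no `G`-neighbor of degree `≥ s`. -/
theorem asleep_nodes_have_small_neighbors {V : Type*} [Fintype V] [LinearOrder V]
    (G : SimpleGraph V) [DecidableRel G.Adj] (s : ℕ) (hs : 0 < s)
    (hmono : ∀ u v : V, G.degree u < G.degree v → u < v)
    (f : V → V)
    (hf : ∀ v : V, (G.neighborSet v).Nonempty →
      f v ∈ G.neighborSet v ∧ ∀ w ∈ G.neighborSet v, w ≤ f v)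
    (H : SimpleGraph V)
    (hH : ∀ v : V, (G.neighborSet v).Nonempty → H.Adj v (f v))
    (u : V)
    (hu : ∀ w : V, H.Reachable u w → G.degree w < s) :
    ∀ w ∈ G.neighborSet u, G.degree w < s := by
  intro w hw
  have hne : (G.neighborSet u).Nonempty := ⟨w, hw⟩
  have hfu := hf u hne
  have hr : H.Reachable u (f u) := (hH u hne).reachable
  have hdfu : G.degree (f u) < s := hu (f u) hr
  by_contra h
  push_neg at h
  have : f u < w := hmono _ _ (lt_of_lt_of_le hdfu h)
  exact absurd (hfu.2 w hw) (not_le.mpr this)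
end

section
/- Let G be a finite simple graph on a vertex set V with |V| = n, let s be a positive integer, and let ≺ be a linear order on V such that deg_G(u) < deg_G(v) implies u ≺ v. For every non-isolated vertex v let f(v) be the ≺-greatest element of N_G(v), and let H₁ be the graph on V whose edges are exactly the pairs {v, f(v)} over non-isolated v. Suppose g assigns, to every vertex v that has a G-neighbor outside its connected component C_{H₁}(v) in H₁, a G-neighbor g(v) of v with C_{H₁}(g(v)) ≠ C_{H₁}(v) such that the ≺-maximal vertex of C_{H₁}(g(v)) is ≺-greatest among the ≺-maximal vertices of all H₁-components other than C_{H₁}(v) that contain a neighbor of v. Let H₂ be H₁ together with the edges {v, g(v)}. Then every connected component of H₂ that contains a vertex of G-degree at least s has more than s vertices; consequently, the number of connected components of H₂ containing a vertex of G-degree at least s is at most n/s. -/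
/-- Fact 3.3 (i): after Stage 1 (each vertex points to its `≺`-greatest
neighbor, giving `H₁`) and Stage 2 (each vertex with a neighbor outside its
`H₁`-component points to a neighbor in an incident `H₁`-component whose
`≺`-maximal vertex is `≺`-greatest, giving `H₂`), every connected component of
`H₂` containing a vertex of `G`-degree `≥ s` has more than `s` vertices; hence
there are at most `n / s` such components. -/
theorem awake_components_are_large {V : Type*} [Fintype V] [LinearOrder V]
    (G : SimpleGraph V) [DecidableRel G.Adj] (n s : ℕ)
    (hn : Fintype.card V = n) (hs : 0 < s)
    (hmono : ∀ u v : V, G.degree u < G.degree v → u < v)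
    (f : V → V)
    (hf : ∀ v : V, (G.neighborSet v).Nonempty →
      f v ∈ G.neighborSet v ∧ ∀ w ∈ G.neighborSet v, w ≤ f v)
    (H₁ : SimpleGraph V)
    (hH₁ : H₁ = SimpleGraph.fromEdgeSet
      {e | ∃ v : V, (G.neighborSet v).Nonempty ∧ e = s(v, f v)})
    (g : V → V)
    (hg : ∀ v : V, (∃ w, G.Adj v w ∧ ¬ H₁.Reachable v w) →
      (G.Adj v (g v) ∧ ¬ H₁.Reachable v (g v) ∧
        ∀ w : V, G.Adj v w → ¬ H₁.Reachable v w →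
          ∀ x : V, H₁.Reachable w x → ∃ y : V, H₁.Reachable (g v) y ∧ x ≤ y))
    (H₂ : SimpleGraph V)
    (hH₂ : H₂ = H₁ ⊔ SimpleGraph.fromEdgeSet
      {e | ∃ v : V, (∃ w, G.Adj v w ∧ ¬ H₁.Reachable v w) ∧ e = s(v, g v)}) :
    (∀ v : V, s ≤ G.degree v → s < (H₂.connectedComponentMk v).supp.ncard) ∧
    {c : H₂.ConnectedComponent | ∃ v ∈ c.supp, s ≤ G.degree v}.ncard ≤ n / s := by
  classical
  have hH₁le : H₁ ≤ H₂ := hH₂ ▸ le_sup_left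
  have main : ∀ v : V, s ≤ G.degree v →
      s < (H₂.connectedComponentMk v).supp.ncard := by
    intro v hv
    set C := H₂.connectedComponentMk v with hC
    have hvC : v ∈ C.supp := by
      rw [SimpleGraph.ConnectedComponent.mem_supp_iff]
    obtain ⟨z, hzC, hzmax⟩ :=
      Set.exists_max_image C.supp id (Set.toFinite _) ⟨v, hvC⟩
    simp only [id] at hzmax
    -- every `G`-neighbor of `z` lies in the component of `v`
    have key : ∀ w : V, G.Adj z w → w ∈ C.supp := by
      intro w hw
      by_contra hwC
      have hreach2 : ¬ H₂.Reachable z w := by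
        intro h
        apply hwC
        rw [SimpleGraph.ConnectedComponent.mem_supp_iff, ← (SimpleGraph.ConnectedComponent.mem_supp_iff C z).mp hzC]
        exact SimpleGraph.ConnectedComponent.sound h.symm
      have hreach1 : ¬ H₁.Reachable z w := fun h => hreach2 (h.mono hH₁le)
      obtain ⟨hgadj, hgreach, hgmax⟩ := hg z ⟨w, hw, hreach1⟩
      -- `f w` is at least `z`
      obtain ⟨hfw_mem, hfw_max⟩ := hf w ⟨z, hw.symm⟩
      have hzfw : z ≤ f w := hfw_max z hw.symm
      have hH₁adj : H₁.Adj w (f w) := by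
        rw [hH₁, SimpleGraph.fromEdgeSet_adj]
        exact ⟨⟨w, ⟨z, hw.symm⟩, rfl⟩, G.ne_of_adj hfw_mem⟩
      obtain ⟨y, hyreach, hyle⟩ := hgmax w hw hreach1 (f w) hH₁adj.reachable
      -- `y` is in the component, hence `y ≤ z`, hence `y = z`; contradiction
      have hH₂zg : H₂.Adj z (g z) := by
        rw [hH₂, SimpleGraph.sup_adj]
        right
        rw [SimpleGraph.fromEdgeSet_adj]
        exact ⟨⟨z, ⟨w, hw, hreach1⟩, rfl⟩, G.ne_of_adj hgadj⟩
      have hyC : y ∈ C.supp := by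
        rw [SimpleGraph.ConnectedComponent.mem_supp_iff, ← (SimpleGraph.ConnectedComponent.mem_supp_iff C z).mp hzC]
        exact SimpleGraph.ConnectedComponent.sound
          ((hH₂zg.reachable.trans (hyreach.mono hH₁le)).symm)
      have hyz : y = z := le_antisymm (hzmax y hyC) (hzfw.trans hyle)
      exact hgreach (hyz ▸ hyreach).symm
    -- size count
    have hsub : insert z (G.neighborSet z) ⊆ C.supp := by
      intro x hx
      rcases Set.mem_insert_iff.mp hx with h | h
      · exact h ▸ hzC
      · exact key x h
    have hdeg : G.degree v ≤ G.degree z := by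
      by_contra h
      exact absurd (hmono z v (lt_of_not_ge h)) (not_lt.mpr (hzmax v hvC))
    have hins : (insert z (G.neighborSet z)).ncard = G.degree z + 1 := by
      rw [Set.ncard_insert_of_notMem (by simp) (Set.toFinite _)]
      congr 1
      rw [Set.ncard_eq_toFinset_card']
      rfl
    calc s ≤ G.degree z := hv.trans hdeg
      _ < G.degree z + 1 := Nat.lt_succ_self _
      _ = (insert z (G.neighborSet z)).ncard := hins.symm
      _ ≤ C.supp.ncard := Set.ncard_le_ncard hsub (Set.toFinite _)
  refine ⟨main, ?_⟩
  -- counting part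
  rw [Nat.le_div_iff_mul_le hs]
  set S := {c : H₂.ConnectedComponent | ∃ v ∈ c.supp, s ≤ G.degree v} with hSdef
  have hSfin : S.Finite := Set.toFinite _
  set T := hSfin.toFinset with hT
  have hTcard : S.ncard = T.card := Set.ncard_eq_toFinset_card S hSfin
  set F : H₂.ConnectedComponent → Finset V :=
    fun c => (Set.toFinite c.supp).toFinset with hF
  have hdisj : ∀ c ∈ T, ∀ d ∈ T, c ≠ d → Disjoint (F c) (F d) := by
    intro c _ d _ hcd
    rw [Finset.disjoint_left]
    intro u hu hu'
    simp only [hF, Set.Finite.mem_toFinset,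
      SimpleGraph.ConnectedComponent.mem_supp_iff] at hu hu'
    exact hcd (hu ▸ hu')
  have hcards : ∀ c ∈ T, s + 1 ≤ (F c).card := by
    intro c hc
    rw [hT, Set.Finite.mem_toFinset] at hc
    obtain ⟨u, hu, hdeg⟩ := hc
    have h1 := main u hdeg
    rw [(SimpleGraph.ConnectedComponent.mem_supp_iff c u).mp hu] at h1
    have h2 : c.supp.ncard = (F c).card := Set.ncard_eq_toFinset_card _ _
    omega
  have hsum : T.card * (s + 1) ≤ ∑ c ∈ T, (F c).card := by
    have h := Finset.card_nsmul_le_sum T (fun c => (F c).card) (s + 1) hcards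
    simpa [smul_eq_mul] using h
  have hunion : ∑ c ∈ T, (F c).card ≤ n := by
    rw [← Finset.card_biUnion hdisj, ← hn]
    exact Finset.card_le_univ _
  calc S.ncard * s ≤ T.card * (s + 1) := by
        rw [hTcard]; exact Nat.mul_le_mul_left _ (Nat.le_succ _)
    _ ≤ n := hsum.trans hunion
end
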